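/- Lower bound for the boundary derivative in terms of the mass of the data: Let 0 < L < π/2. There exists a constant c = c(L) > 0, depending only on L, such that for every continuously differentiable g : [0,L] → ℝ with g ≥ 0 and g' ≥ 0 on [0,L], and every twice continuously differentiable G : [0,L] → ℝ with 4G + G'' = g on [0,L] and G(0) = G(L) = 0, one has G'(L) ≥ c ∫₀^L g(θ) dθ. -/

import Mathlib

open Set Real intervalIntegral
open scoped Real

noncomputable section

/-!
Multiplying `G'' + 4G = g` by `sin 2θ` and integrating, the boundary conditions leave only
`∫₀^L g(θ) sin 2θ dθ = G'(L) sin 2L`. As `g` is nonnegative and nondecreasing, at least half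
of its mass lies in `[L/2, L]`, where `sin 2θ` is bounded below by `min (sin L) (sin 2L) > 0` by concavity of `sin`
on `[0, π]`.
-/

/-- `G' sin ωθ - ω G cos ωθ` is a primitive of `(G'' + ω²G) sin ωθ`. -/
theorem integral_mul_sin_eq_derivWithin_mul_sin {g G : ℝ → ℝ} {L ω : ℝ} (hL : 0 < L)
    (hG : ContDiffOn ℝ 2 G (Icc 0 L))
    (hode : ∀ θ ∈ Icc 0 L, ω ^ 2 * G θ + iteratedDerivWithin 2 G (Icc 0 L) θ = g θ)
    (hG0 : G 0 = 0) (hGL : G L = 0) :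
    ∫ θ in (0:ℝ)..L, g θ * sin (ω * θ) = derivWithin G (Icc 0 L) L * sin (ω * L) := by
  set s := Icc (0:ℝ) L
  set G' := derivWithin G s
  have hG' : ContDiffOn ℝ 1 G' s := hG.derivWithin (uniqueDiffOn_Icc hL) (by norm_num)
  have hg : ContinuousOn g s :=
    ((continuousOn_const.mul hG.continuousOn).add
      (hG.continuousOn_iteratedDerivWithin le_rfl (uniqueDiffOn_Icc hL))).congr
      fun θ hθ => (hode θ hθ).symm
  have hderiv : ∀ θ ∈ s,
      HasDerivWithinAt (fun x => G' x * sin (ω * x) - ω * (G x * cos (ω * x)))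
        (g θ * sin (ω * θ)) s θ := by
    intro θ hθ
    have hG'' : derivWithin G' s θ = g θ - ω ^ 2 * G θ := by
      rw [← hode θ hθ, iteratedDerivWithin_eq_iterate]
      simp only [Function.iterate_succ, Function.iterate_zero, Function.comp_apply, id, G']
      ring
    have hsin := ((hasDerivAt_id θ).const_mul ω).sin.hasDerivWithinAt (s := s)
    have hcos := ((hasDerivAt_id θ).const_mul ω).cos.hasDerivWithinAt (s := s)
    refine (((hG'.differentiableOn one_ne_zero θ hθ).hasDerivWithinAt.mul hsin).sub
      (((hG.differentiableOn two_ne_zero θ hθ).hasDerivWithinAt.mul hcos).const_mul ω)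
      ).congr_deriv ?_
    simp only [hG'', id, G']
    ring
  rw [integral_eq_sub_of_hasDeriv_right_of_le hL.le
    (fun θ hθ => (hderiv θ hθ).continuousWithinAt)
    (fun θ hθ => ((hderiv θ (Ioo_subset_Icc_self hθ)).hasDerivAt
      (Icc_mem_nhds hθ.1 hθ.2)).hasDerivWithinAt)
    ((hg.mono (uIcc_of_le hL.le).subset).intervalIntegrable.mul_continuousOn
      (by fun_prop))]
  simp [hG0, hGL, G']

theorem monotoneOn_Icc_of_derivWithin_nonneg {g : ℝ → ℝ} {a b : ℝ}
    (hg : DifferentiableOn ℝ g (Icc a b))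
    (hg' : ∀ x ∈ Icc a b, 0 ≤ derivWithin g (Icc a b) x) : MonotoneOn g (Icc a b) :=
  monotoneOn_of_hasDerivWithinAt_nonneg (convex_Icc a b) hg.continuousOn
    (fun x hx => (hg x (interior_subset hx)).hasDerivWithinAt.mono interior_subset)
    (fun x hx => hg' x (interior_subset hx))

theorem MonotoneOn.integral_le_two_mul_integral_upper_half {g : ℝ → ℝ} {a b : ℝ} (hab : a ≤ b)
    (hg : MonotoneOn g (Icc a b)) :
    ∫ x in a..b, g x ≤ 2 * ∫ x in (a + b) / 2..b, g x := by
  have ham : a ≤ (a + b) / 2 := by linarith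
  have hmb : (a + b) / 2 ≤ b := by linarith
  set m := (a + b) / 2
  have hint : ∀ c ∈ Icc a b, ∀ d ∈ Icc a b, IntervalIntegrable g MeasureTheory.volume c d :=
    fun c hc d hd => (hg.mono (uIcc_subset_Icc hc hd)).intervalIntegrable
  have hm : m ∈ Icc a b := ⟨ham, hmb⟩
  have ha : a ∈ Icc a b := ⟨le_rfl, hab⟩
  have hb : b ∈ Icc a b := ⟨hab, le_rfl⟩
  have hlower : ∫ x in a..m, g x ≤ (m - a) * g m := by
    simpa [mul_comm] using integral_mono_on ham (hint a ha m hm) intervalIntegrable_const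
      fun x hx => hg ⟨hx.1, hx.2.trans hmb⟩ hm hx.2
  have hupper : (b - m) * g m ≤ ∫ x in m..b, g x := by
    simpa [mul_comm] using integral_mono_on hmb intervalIntegrable_const (hint m hm b hb)
      fun x hx => hg hm ⟨ham.trans hx.1, hx.2⟩ hx.1
  rw [← integral_add_adjacent_intervals (hint a ha m hm) (hint m hm b hb)]
  rw [show m - a = b - m by ring] at hlower
  linarith

theorem MonotoneOn.half_mul_integral_le_integral_mul {g w : ℝ → ℝ} {a b μ : ℝ} (hab : a ≤ b)
    (hg : MonotoneOn g (Icc a b)) (hg0 : ∀ x ∈ Icc a b, 0 ≤ g x)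
    (hw : ContinuousOn w (Icc a b)) (hw0 : ∀ x ∈ Icc a b, 0 ≤ w x)
    (hwμ : ∀ x ∈ Icc ((a + b) / 2) b, μ ≤ w x) (hμ : 0 ≤ μ) :
    μ / 2 * ∫ x in a..b, g x ≤ ∫ x in a..b, g x * w x := by
  have ham : a ≤ (a + b) / 2 := by linarith
  have hmb : (a + b) / 2 ≤ b := by linarith
  set m := (a + b) / 2
  have hint : ∀ c ∈ Icc a b, ∀ d ∈ Icc a b, IntervalIntegrable g MeasureTheory.volume c d :=
    fun c hc d hd => (hg.mono (uIcc_subset_Icc hc hd)).intervalIntegrable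
  have hintw : ∀ c ∈ Icc a b, ∀ d ∈ Icc a b,
      IntervalIntegrable (fun x => g x * w x) MeasureTheory.volume c d :=
    fun c hc d hd => (hint c hc d hd).mul_continuousOn (hw.mono (uIcc_subset_Icc hc hd))
  have hm : m ∈ Icc a b := ⟨ham, hmb⟩
  have ha : a ∈ Icc a b := ⟨le_rfl, hab⟩
  have hb : b ∈ Icc a b := ⟨hab, le_rfl⟩
  have hlower : 0 ≤ ∫ x in a..m, g x * w x :=
    integral_nonneg ham fun x hx =>
      have hx' : x ∈ Icc a b := ⟨hx.1, hx.2.trans hmb⟩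
      mul_nonneg (hg0 x hx') (hw0 x hx')
  have hupper : μ * ∫ x in m..b, g x ≤ ∫ x in m..b, g x * w x := by
    rw [← integral_const_mul]
    refine integral_mono_on hmb ((hint m hm b hb).const_mul μ) (hintw m hm b hb) fun x hx => ?_
    rw [mul_comm]
    exact mul_le_mul_of_nonneg_left (hwμ x hx) (hg0 x ⟨ham.trans hx.1, hx.2⟩)
  have hhalf := hg.integral_le_two_mul_integral_upper_half hab
  rw [← integral_add_adjacent_intervals (hintw a ha m hm) (hintw m hm b hb)]
  nlinarith

theorem min_sin_le_sin_of_mem_Icc {x y z : ℝ} (hx : 0 ≤ x) (hy : y ≤ π) (hz : z ∈ Icc x y) :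
    min (sin x) (sin y) ≤ sin z :=
  strictConcaveOn_sin_Icc.concaveOn.min_le_of_mem_Icc ⟨hx, hz.1.trans hz.2 |>.trans hy⟩
    ⟨hx.trans (hz.1.trans hz.2), hy⟩ hz

theorem elliptic_bvp_mass_lower_bound
    (L : ℝ) (hL0 : 0 < L) (hL : L < π/2) :
    ∃ c : ℝ, 0 < c ∧
      ∀ g G : ℝ → ℝ,
      ContDiffOn ℝ 1 g (Icc 0 L) →
      (∀ θ ∈ Icc (0:ℝ) L, 0 ≤ g θ) →
      (∀ θ ∈ Icc (0:ℝ) L, 0 ≤ derivWithin g (Icc 0 L) θ) →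
      ContDiffOn ℝ 2 G (Icc 0 L) →
      (∀ θ ∈ Icc (0:ℝ) L, 4 * G θ + iteratedDerivWithin 2 G (Icc 0 L) θ = g θ) →
      G 0 = 0 → G L = 0 →
      c * (∫ θ in (0:ℝ)..L, g θ) ≤ derivWithin G (Icc 0 L) L := by
  have hsin2L : 0 < sin (2 * L) := sin_pos_of_pos_of_lt_pi (by linarith) (by linarith)
  set μ := min (sin L) (sin (2 * L))
  have hμ : 0 < μ := lt_min (sin_pos_of_pos_of_lt_pi hL0 (by linarith)) hsin2L
  refine ⟨μ / 2 / sin (2 * L), by positivity, fun g G hg hg0 hg' hG hode hG0 hGL => ?_⟩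
  have hweighted :
      ∫ θ in (0:ℝ)..L, g θ * sin (2 * θ) = derivWithin G (Icc 0 L) L * sin (2 * L) :=
    integral_mul_sin_eq_derivWithin_mul_sin hL0 hG (fun θ hθ => by rw [← hode θ hθ]; norm_num)
      hG0 hGL
  have hmass : μ / 2 * ∫ θ in (0:ℝ)..L, g θ ≤ ∫ θ in (0:ℝ)..L, g θ * sin (2 * θ) :=
    (monotoneOn_Icc_of_derivWithin_nonneg (hg.differentiableOn one_ne_zero) hg'
      ).half_mul_integral_le_integral_mul hL0.le hg0 (by fun_prop)
      (fun θ hθ => sin_nonneg_of_nonneg_of_le_pi (by linarith [hθ.1]) (by linarith [hθ.2]))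
      (fun θ hθ => min_sin_le_sin_of_mem_Icc hL0.le (by linarith)
        ⟨by linarith [hθ.1], by linarith [hθ.2]⟩) hμ.le
  rw [div_mul_eq_mul_div, div_le_iff₀ hsin2L]
  linarith
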